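/- arXiv:1703.08658 — 6 statements merged into one kernel-verified Lean document; each statement's English description precedes it below -/
import Mathlib

section
/- Let X ⊂ {1,…,N} with |X| < N. For each coordinate index i (1 ≤ i ≤ 2d), let j(i,X) be the ≼_i-smallest element of {1,…,N} \ X, and let bv(i,X) be the corresponding endpoint coordinate r_{j(i,X),i}. If for each t with 1 ≤ t ≤ d we have bv(2t−1,X) ≤ bv(2t,X), and for each j ∈ X there exists i with j ≺_i j(i,X), then the d-rectangle R = ∏_t [bv(2t−1,X), bv(2t,X)] is nonempty, equals ⋂_{j∉X} R_j, and X = {j : R ⊄ R_j}. -/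
/-- A `d`-rectangle: the product of `d` closed intervals in `ℝ^d`. -/
def Rect {d : ℕ} (lo hi : Fin d → ℝ) : Set (Fin d → ℝ) :=
  {x | ∀ t, x t ∈ Set.Icc (lo t) (hi t)}

/-- The total order `≼ᵢ` on rectangle indices for coordinate `t` and side `side`
(`false` = left endpoint, reversed order; `true` = right endpoint, usual order),
with ties broken by the index. -/
def preceq {d N : ℕ} (lo hi : Fin N → Fin d → ℝ) (t : Fin d) (side : Bool)
    (j k : Fin N) : Prop :=
  if side then hi j t < hi k t ∨ (hi j t = hi k t ∧ j ≤ k)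
  else lo k t < lo j t ∨ (lo j t = lo k t ∧ j ≤ k)

/-- The strict partial order `≺ᵢ`, comparing endpoint values only. -/
def prec {d N : ℕ} (lo hi : Fin N → Fin d → ℝ) (t : Fin d) (side : Bool)
    (j k : Fin N) : Prop :=
  if side then hi j t < hi k t else lo k t < lo j t

theorem stmt7 {d N : ℕ} (lo hi : Fin N → Fin d → ℝ) (X : Set (Fin N)) (hX : X ≠ Set.univ)
    (jX : Fin d → Bool → Fin N)
    (hjX : ∀ t b, jX t b ∉ X ∧ ∀ k ∉ X, preceq lo hi t b (jX t b) k)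
    (h1 : ∀ t, lo (jX t false) t ≤ hi (jX t true) t)
    (h2 : ∀ j ∈ X, ∃ t b, prec lo hi t b j (jX t b)) :
    (Rect (fun t => lo (jX t false) t) (fun t => hi (jX t true) t)).Nonempty ∧
    Rect (fun t => lo (jX t false) t) (fun t => hi (jX t true) t)
      = ⋂ j ∈ Xᶜ, Rect (lo j) (hi j) ∧
    X = {j | ¬ Rect (fun t => lo (jX t false) t) (fun t => hi (jX t true) t)
              ⊆ Rect (lo j) (hi j)} := by
  classical
  set L : Fin d → ℝ := fun t => lo (jX t false) t with hL
  set H : Fin d → ℝ := fun t => hi (jX t true) t with hH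
  have hLmem : L ∈ Rect L H := fun t => ⟨le_refl _, h1 t⟩
  have hHmem : H ∈ Rect L H := fun t => ⟨h1 t, le_refl _⟩
  have hsub : ∀ j ∉ X, Rect L H ⊆ Rect (lo j) (hi j) := by
    intro j hj x hx t
    have hlo : lo j t ≤ L t := by
      have := (hjX t false).2 j hj
      simp only [preceq, if_neg] at this
      rcases this with h | h
      · exact le_of_lt h
      · exact le_of_eq h.1.symm
    have hhi : H t ≤ hi j t := by
      have := (hjX t true).2 j hj
      simp only [preceq, if_pos] at this
      rcases this with h | h
      · exact le_of_lt h
      · exact le_of_eq h.1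
    exact ⟨le_trans hlo (hx t).1, le_trans (hx t).2 hhi⟩
  refine ⟨⟨L, hLmem⟩, ?_, ?_⟩
  · apply Set.Subset.antisymm
    · intro x hx
      simp only [Set.mem_iInter]
      intro j hj
      exact hsub j hj hx
    · intro x hx t
      simp only [Set.mem_iInter] at hx
      constructor
      · exact (hx (jX t false) (hjX t false).1 t).1
      · exact (hx (jX t true) (hjX t true).1 t).2
  · apply Set.Subset.antisymm
    · intro j hj
      obtain ⟨t, b, hb⟩ := h2 j hj
      cases b with
      | false =>
        simp only [prec, if_neg] at hb
        intro hsub'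
        have := (hsub' hLmem t).1
        simp only [hL] at this
        exact absurd this (not_le.mpr hb)
      | true =>
        simp only [prec, if_pos] at hb
        intro hsub'
        have := (hsub' hHmem t).2
        simp only [hH] at this
        exact absurd this (not_le.mpr hb)
    · intro j hj
      by_contra hjX'
      exact hj (hsub j hjX' )
end

section
/- Let X ⊂ {1,…,N} with |X| < N, and suppose X = U(R) = {j : R ⊄ R_j} for some nonempty intersection rectangle R = ⋂_{j∈L} R_j with L ⊆ {1,…,N} nonempty. Then for each coordinate index i (1 ≤ i ≤ 2d), the i-th endpoint of R equals bv(i,X) = r_{j(i,X),i}, where j(i,X) is the ≼_i-smallest element of {1,…,N} \ X. -/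
theorem stmt8 {d N : ℕ} (lo hi : Fin N → Fin d → ℝ) (L : Finset (Fin N)) (hL : L.Nonempty)
    (hne : (⋂ j ∈ L, Rect (lo j) (hi j)).Nonempty)
    (X : Set (Fin N))
    (hXdef : X = {k | ¬ (⋂ j ∈ L, Rect (lo j) (hi j)) ⊆ Rect (lo k) (hi k)})
    (hX : X ≠ Set.univ)
    (jX : Fin d → Bool → Fin N)
    (hjX : ∀ t b, jX t b ∉ X ∧ ∀ k ∉ X, preceq lo hi t b (jX t b) k) :
    ∀ t, (L.sup' hL fun j => lo j t) = lo (jX t false) t ∧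
         (L.inf' hL fun j => hi j t) = hi (jX t true) t := by
  obtain ⟨x, hx⟩ := hne
  have hxR : ∀ j ∈ L, ∀ t, lo j t ≤ x t ∧ x t ≤ hi j t := by
    intro j hj t
    have := Set.mem_iInter₂.mp hx j hj t
    exact ⟨this.1, this.2⟩
  have hLX : ∀ j ∈ L, j ∉ X := by
    intro j hj hjX'
    rw [hXdef] at hjX'
    exact hjX' (Set.biInter_subset_of_mem hj)
  -- key: for k ∉ X, lo k t ≤ sup' and inf' ≤ hi k t
  have key : ∀ k ∉ X, ∀ t,
      lo k t ≤ (L.sup' hL fun j => lo j t) ∧ (L.inf' hL fun j => hi j t) ≤ hi k t := by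
    intro k hk t
    rw [hXdef] at hk
    have hsub : (⋂ j ∈ L, Rect (lo j) (hi j)) ⊆ Rect (lo k) (hi k) := not_not.mp hk
    constructor
    · -- use the point x updated at t to sup'
      set y := Function.update x t (L.sup' hL fun j => lo j t) with hy
      have hyR : y ∈ ⋂ j ∈ L, Rect (lo j) (hi j) := by
        refine Set.mem_iInter₂.mpr fun j hj t' => ?_
        by_cases h : t' = t
        · subst h
          rw [hy, Function.update_self]
          refine ⟨Finset.le_sup' (fun j => lo j t') hj, ?_⟩
          exact le_trans (Finset.sup'_le _ _ fun j' hj' => (hxR j' hj' t').1)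
            (hxR j hj t').2
        · rw [hy, Function.update_of_ne h]
          exact Set.mem_iInter₂.mp hx j hj t'
      have := (hsub hyR t).1
      rwa [hy, Function.update_self] at this
    · set y := Function.update x t (L.inf' hL fun j => hi j t) with hy
      have hyR : y ∈ ⋂ j ∈ L, Rect (lo j) (hi j) := by
        refine Set.mem_iInter₂.mpr fun j hj t' => ?_
        by_cases h : t' = t
        · subst h
          rw [hy, Function.update_self]
          refine ⟨le_trans (hxR j hj t').1
            (Finset.le_inf' _ _ fun j' hj' => (hxR j' hj' t').2), Finset.inf'_le (fun j => hi j t') hj⟩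
        · rw [hy, Function.update_of_ne h]
          exact Set.mem_iInter₂.mp hx j hj t'
      have := (hsub hyR t).2
      rwa [hy, Function.update_self] at this
  intro t
  constructor
  · refine le_antisymm ?_ ((key _ (hjX t false).1 t).1)
    refine Finset.sup'_le _ _ fun j hj => ?_
    have h := (hjX t false).2 j (hLX j hj)
    simp only [preceq, if_neg Bool.false_ne_true] at h
    rcases h with h | h
    · exact h.le
    · exact h.1.ge
  · refine le_antisymm ((key _ (hjX t true).1 t).2) ?_
    refine Finset.le_inf' _ _ fun j hj => ?_
    have h := (hjX t true).2 j (hLX j hj)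
    simp only [preceq, if_pos rfl] at h
    rcases h with h | h
    · exact h.le
    · exact h.1.le
end

section
/- Let X ⊂ {1,…,N} with |X| < N, and suppose X = {j : R ⊄ R_j} for some nonempty intersection rectangle R = ⋂_{j∈L} R_j (L nonempty). Then for each j ∈ X there exists a coordinate index i with j ≺_i j(i,X), where j(i,X) is the ≼_i-smallest element of {1,…,N}\X. -/
theorem stmt9 {d N : ℕ} (lo hi : Fin N → Fin d → ℝ) (L : Finset (Fin N)) (hL : L.Nonempty)
    (hne : (⋂ j ∈ L, Rect (lo j) (hi j)).Nonempty)
    (X : Set (Fin N))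
    (hXdef : X = {k | ¬ (⋂ j ∈ L, Rect (lo j) (hi j)) ⊆ Rect (lo k) (hi k)})
    (hX : X ≠ Set.univ)
    (jX : Fin d → Bool → Fin N)
    (hjX : ∀ t b, jX t b ∉ X ∧ ∀ k ∉ X, preceq lo hi t b (jX t b) k) :
    ∀ j ∈ X, ∃ t b, prec lo hi t b j (jX t b) := by
  intro j hj
  rw [hXdef] at hj
  -- get a point x in R but not in Rect j
  simp only [Set.mem_setOf_eq] at hj
  rw [Set.not_subset] at hj
  obtain ⟨x, hxR, hxj⟩ := hj
  simp only [Rect, Set.mem_setOf_eq, Set.mem_Icc, not_forall] at hxj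
  obtain ⟨t, ht⟩ := hxj
  rw [not_and_or, not_le, not_le] at ht
  rcases ht with h | h
  · refine ⟨t, false, ?_⟩
    have hmem : x ∈ Rect (lo (jX t false)) (hi (jX t false)) := by
      have := (hjX t false).1
      rw [hXdef] at this
      simp only [Set.mem_setOf_eq, not_not] at this
      exact this hxR
    have := (hmem t).1
    show lo (jX t false) t < lo j t
    linarith
  · refine ⟨t, true, ?_⟩
    have hmem : x ∈ Rect (lo (jX t true)) (hi (jX t true)) := by
      have := (hjX t true).1
      rw [hXdef] at this
      simp only [Set.mem_setOf_eq, not_not] at this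
      exact this hxR
    have := (hmem t).2
    show hi j t < hi (jX t true) t
    linarith
end

section
/- Let X ⊂ {1,…,N} with |X| < N, and suppose X = {j : R ⊄ R_j} for some nonempty intersection rectangle R. Then for each t with 1 ≤ t ≤ d, bv(2t−1, X) ≤ bv(2t, X), where bv(i,X) = r_{j(i,X),i} and j(i,X) is the ≼_i-smallest element of {1,…,N}\X. -/
theorem stmt10 {d N : ℕ} (lo hi : Fin N → Fin d → ℝ) (L : Finset (Fin N)) (hL : L.Nonempty)
    (hne : (⋂ j ∈ L, Rect (lo j) (hi j)).Nonempty)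
    (X : Set (Fin N))
    (hXdef : X = {k | ¬ (⋂ j ∈ L, Rect (lo j) (hi j)) ⊆ Rect (lo k) (hi k)})
    (hX : X ≠ Set.univ)
    (jX : Fin d → Bool → Fin N)
    (hjX : ∀ t b, jX t b ∉ X ∧ ∀ k ∉ X, preceq lo hi t b (jX t b) k) :
    ∀ t, lo (jX t false) t ≤ hi (jX t true) t := by
  intro t
  obtain ⟨x, hx⟩ := hne
  have hmem : ∀ k, k ∉ X → x ∈ Rect (lo k) (hi k) := by
    intro k hk
    have : ¬ k ∈ {k | ¬ (⋂ j ∈ L, Rect (lo j) (hi j)) ⊆ Rect (lo k) (hi k)} := by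
      rw [← hXdef]; exact hk
    simp only [Set.mem_setOf_eq, not_not] at this
    exact this hx
  have h1 := (hmem _ (hjX t false).1 t).1
  have h2 := (hmem _ (hjX t true).1 t).2
  linarith
end

section
/- The map U ↦ bv(U), sending a set U ∈ 𝒰_r to the d-rectangle with i-th endpoint bv(i,U), is injective on 𝒰_r, with inverse R ↦ {j : R ⊄ R_j}. -/
/-- Membership in `𝒰_r`: `U` is the set `U(R) = {k : R ⊄ R_k}` for some nonempty
intersection rectangle `R = ⋂_{j∈L} R_j` with `|L| ≥ N - r`. -/
def memU {d N : ℕ} (lo hi : Fin N → Fin d → ℝ) (r : ℕ) (U : Set (Fin N)) : Prop :=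
  ∃ L : Finset (Fin N), L.Nonempty ∧ N - r ≤ L.card ∧
    (⋂ j ∈ L, Rect (lo j) (hi j)).Nonempty ∧
    U = {k | ¬ (⋂ j ∈ L, Rect (lo j) (hi j)) ⊆ Rect (lo k) (hi k)}

lemma rect_inter {d N : ℕ} (lo hi : Fin N → Fin d → ℝ) (L : Finset (Fin N))
    (hL : L.Nonempty) :
    (⋂ j ∈ L, Rect (lo j) (hi j)) =
      Rect (fun t => L.sup' hL (fun j => lo j t))
        (fun t => L.inf' hL (fun j => hi j t)) := by
  ext x
  simp only [Set.mem_iInter, Rect, Set.mem_setOf_eq, Set.mem_Icc,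
    Finset.sup'_le_iff, Finset.le_inf'_iff]
  constructor
  · intro h t; exact ⟨fun j hj => (h j hj t).1, fun j hj => (h j hj t).2⟩
  · intro h j hj t; exact ⟨(h t).1 j hj, (h t).2 j hj⟩

lemma rect_le {d : ℕ} {a b : Fin d → ℝ} (h : (Rect a b).Nonempty) :
    ∀ t, a t ≤ b t := by
  obtain ⟨x, hx⟩ := h
  exact fun t => le_trans (hx t).1 (hx t).2

lemma rect_subset_endpoints {d : ℕ} {a b c e : Fin d → ℝ} (h : (Rect a b).Nonempty)
    (hs : Rect a b ⊆ Rect c e) : ∀ t, c t ≤ a t ∧ b t ≤ e t := by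
  have hab := rect_le h
  have ha : a ∈ Rect a b := fun t => ⟨le_refl _, hab t⟩
  have hb : b ∈ Rect a b := fun t => ⟨hab t, le_refl _⟩
  exact fun t => ⟨(hs ha t).1, (hs hb t).2⟩

theorem stmt11 {d N r : ℕ} (hr : r < N) (lo hi : Fin N → Fin d → ℝ) :
    (∀ U : Set (Fin N), memU lo hi r U → ∀ jU : Fin d → Bool → Fin N,
      (∀ t b, jU t b ∉ U ∧ ∀ k ∉ U, preceq lo hi t b (jU t b) k) →
      {k | ¬ Rect (fun t => lo (jU t false) t) (fun t => hi (jU t true) t)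
            ⊆ Rect (lo k) (hi k)} = U) ∧
    (∀ (U U' : Set (Fin N)) (jU jU' : Fin d → Bool → Fin N),
      memU lo hi r U → memU lo hi r U' →
      (∀ t b, jU t b ∉ U ∧ ∀ k ∉ U, preceq lo hi t b (jU t b) k) →
      (∀ t b, jU' t b ∉ U' ∧ ∀ k ∉ U', preceq lo hi t b (jU' t b) k) →
      (∀ t, lo (jU t false) t = lo (jU' t false) t ∧
            hi (jU t true) t = hi (jU' t true) t) →
      U = U') := by
  have key : ∀ U : Set (Fin N), memU lo hi r U → ∀ jU : Fin d → Bool → Fin N,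
      (∀ t b, jU t b ∉ U ∧ ∀ k ∉ U, preceq lo hi t b (jU t b) k) →
      {k | ¬ Rect (fun t => lo (jU t false) t) (fun t => hi (jU t true) t)
            ⊆ Rect (lo k) (hi k)} = U := by
    rintro U ⟨L, hL, -, hne, hUeq⟩ jU hjU
    have hmem : ∀ k, k ∉ U ↔ (⋂ j ∈ L, Rect (lo j) (hi j)) ⊆ Rect (lo k) (hi k) := by
      intro k; rw [hUeq]; simp
    have hRr := rect_inter lo hi L hL
    have hne' : (Rect (fun t => L.sup' hL (fun j => lo j t))
        (fun t => L.inf' hL (fun j => hi j t))).Nonempty := hRr ▸ hne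
    have hsub : ∀ k, k ∉ U →
        ∀ t, lo k t ≤ L.sup' hL (fun j => lo j t) ∧
          L.inf' hL (fun j => hi j t) ≤ hi k t := by
      intro k hk
      exact rect_subset_endpoints hne' (hRr ▸ (hmem k).1 hk)
    have hLnotU : ∀ j ∈ L, j ∉ U := fun j hj =>
      (hmem j).2 (Set.biInter_subset_of_mem hj)
    have hlo : ∀ t, lo (jU t false) t = L.sup' hL (fun j => lo j t) := by
      intro t
      obtain ⟨j0, hj0, hj0e⟩ := Finset.exists_mem_eq_sup' hL (fun j => lo j t)
      have h1 : lo (jU t false) t ≤ L.sup' hL (fun j => lo j t) :=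
        (hsub _ (hjU t false).1 t).1
      have h2 := (hjU t false).2 j0 (hLnotU j0 hj0)
      simp only [preceq, if_neg, Bool.false_eq_true, ite_false] at h2
      have h3 : lo j0 t ≤ lo (jU t false) t := by
        rcases h2 with h | ⟨h, -⟩
        · exact le_of_lt h
        · exact le_of_eq h.symm
      exact le_antisymm h1 (hj0e ▸ h3)
    have hhi : ∀ t, hi (jU t true) t = L.inf' hL (fun j => hi j t) := by
      intro t
      obtain ⟨j0, hj0, hj0e⟩ := Finset.exists_mem_eq_inf' hL (fun j => hi j t)
      have h1 : L.inf' hL (fun j => hi j t) ≤ hi (jU t true) t :=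
        (hsub _ (hjU t true).1 t).2
      have h2 := (hjU t true).2 j0 (hLnotU j0 hj0)
      simp only [preceq, ite_true] at h2
      have h3 : hi (jU t true) t ≤ hi j0 t := by
        rcases h2 with h | ⟨h, -⟩
        · exact le_of_lt h
        · exact le_of_eq h
      exact le_antisymm (hj0e ▸ h3) h1
    have hfl : (fun t => lo (jU t false) t) = fun t => L.sup' hL (fun j => lo j t) :=
      funext hlo
    have hfh : (fun t => hi (jU t true) t) = fun t => L.inf' hL (fun j => hi j t) :=
      funext hhi
    rw [hUeq, hfl, hfh, hRr]
  refine ⟨key, ?_⟩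
  intro U U' jU jU' hU hU' hjU hjU' heq
  have hfl : (fun t => lo (jU t false) t) = fun t => lo (jU' t false) t :=
    funext fun t => (heq t).1
  have hfh : (fun t => hi (jU t true) t) = fun t => hi (jU' t true) t :=
    funext fun t => (heq t).2
  rw [← key U hU jU hjU, ← key U' hU' jU' hjU', hfl, hfh]
end

section
/- Let X ⊂ {1,…,N} with |X| < N satisfy the two conditions of the characterization (bv(2t−1,X) ≤ bv(2t,X) for all t, and every j ∈ X satisfies j ≺_i j(i,X) for some i). Then for every j ∉ X, the rectangle R = ∏_t [bv(2t−1,X), bv(2t,X)] satisfies R ⊆ R_j. -/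
theorem stmt19 {d N : ℕ} (lo hi : Fin N → Fin d → ℝ) (X : Set (Fin N)) (hX : X ≠ Set.univ)
    (jX : Fin d → Bool → Fin N)
    (hjX : ∀ t b, jX t b ∉ X ∧ ∀ k ∉ X, preceq lo hi t b (jX t b) k)
    (h1 : ∀ t, lo (jX t false) t ≤ hi (jX t true) t)
    (h2 : ∀ j ∈ X, ∃ t b, prec lo hi t b j (jX t b)) :
    ∀ j ∉ X, Rect (fun t => lo (jX t false) t) (fun t => hi (jX t true) t)
      ⊆ Rect (lo j) (hi j) := by
  intro j hj x hx t
  have hlo := (hjX t false).2 j hj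
  have hhi := (hjX t true).2 j hj
  simp only [preceq, if_true, if_false, Bool.false_eq_true, ite_false, ite_true] at hlo hhi
  have hl : lo j t ≤ lo (jX t false) t := by
    rcases hlo with h | ⟨h, _⟩ <;> linarith
  have hh : hi (jX t true) t ≤ hi j t := by
    rcases hhi with h | ⟨h, _⟩ <;> linarith
  obtain ⟨h1x, h2x⟩ := hx t
  exact ⟨le_trans hl h1x, le_trans h2x hh⟩
end
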